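/- Knowledge leakage in ADPAL: there exists a 3-state, 3-agent ADPAL model M with state 1 such that for φ = K_c K_c p and ψ = K_b p, one has (M,1) ⊭ K_a ψ but (M,1) ⊨ [φ] K_a ψ. Concretely: states {0,1,2}; relations for a and c are the identity, the relation for b is the symmetric reflexive closure of 0∼1∼2; depths d(a,·)=1 everywhere, d(b,0)=0, d(b,1)=2, d(b,2)=0, d(c,·)=2 everywhere; the atom p holds exactly in states 0 and 1. -/
import Mathlib


/-- Formulas of ADPAL. -/
inductive Form (A P : Type) : Type
  | atom : P → Form A P
  | eqd  : A → ℕ → Form A P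
  | ged  : A → ℕ → Form A P
  | neg  : Form A P → Form A P
  | and  : Form A P → Form A P → Form A P
  | imp  : Form A P → Form A P → Form A P
  | kinf : A → Form A P → Form A P
  | k    : A → Form A P → Form A P
  | ann  : Form A P → Form A P → Form A P

namespace Form
/-- Modal depth. -/
def md {A P : Type} : Form A P → ℕ
  | atom _ => 0
  | eqd _ _ => 0
  | ged _ _ => 0
  | neg φ => φ.md
  | and φ ψ => max φ.md ψ.md
  | imp φ ψ => max φ.md ψ.md
  | kinf _ φ => φ.md + 1
  | k _ φ => φ.md + 1
  | ann φ ψ => φ.md + ψ.md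
end Form

/-- An ADPAL model: relations are only assumed reflexive. -/
structure Model (A P : Type) where
  S : Type
  r : A → S → S → Prop
  refl : ∀ a s, r a s s
  V : S → P → Prop
  d : A → S → ℕ

/-- The ADPAL model update: the state set is kept; a pair `s ∼_a t` is removed
exactly when the agent is deep enough for the announcement at `s` and exactly
one of `s, t` satisfies it (`X` is the set of states satisfying the
announcement, `k` its modal depth); depths are decremented by `k` exactly where
the agent is deep enough. -/
def upd {A P : Type} (M : Model A P) (X : M.S → Prop) (k : ℕ) : Model A P where
  S := M.S
  r a s t := M.r a s t ∧ ¬ (M.d a s ≥ k ∧ (X s ↔ ¬ X t))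
  refl a s := ⟨M.refl a s, fun h => (iff_not_self h.2)⟩
  V := M.V
  d a s := if M.d a s ≥ k then M.d a s - k else M.d a s

/-- ADPAL satisfaction. -/
def sat {A P : Type} : Form A P → (M : Model A P) → M.S → Prop
  | .atom p, M, s => M.V s p
  | .eqd a n, M, s => M.d a s = n
  | .ged a n, M, s => M.d a s ≥ n
  | .neg φ, M, s => ¬ sat φ M s
  | .and φ ψ, M, s => sat φ M s ∧ sat ψ M s
  | .imp φ ψ, M, s => sat φ M s → sat ψ M s
  | .kinf a φ, M, s => ∀ t, M.r a s t → sat φ M t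
  | .k a φ, M, s => M.d a s ≥ φ.md ∧ ∀ t, M.r a s t → sat φ M t
  | .ann φ ψ, M, s => sat φ M s → sat ψ (upd M (fun t => sat φ M t) φ.md) s

/-- The leakage model: three states `0,1,2`; agents `a = 0`, `b = 1`, `c = 2`;
relations for `a` and `c` are the identity, the relation for `b` is the
symmetric reflexive closure of `0 ∼ 1 ∼ 2`; depths `d(a,·) = 1`, `d(b,·)` is
`0, 2, 0` on the respective states, `d(c,·) = 2`; the unique atom `p` holds
exactly in states `0` and `1`. -/
def leakModel : Model (Fin 3) Unit where
  S := Fin 3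
  r i s t :=
    if i = 1 then (s.val ≤ t.val + 1 ∧ t.val ≤ s.val + 1) else s = t
  refl i s := by by_cases h : i = 1 <;> simp [h]
  V s _ := s.val ≤ 1
  d i s := if i = 0 then 1 else if i = 1 then (if s = 1 then 2 else 0) else 2

/-- Knowledge leakage in ADPAL: in `leakModel` at state `1`, with
`φ = K_c K_c p` and `ψ = K_b p`, agent `a` does not know `ψ`, yet after the
announcement of `φ` (which `a` is too shallow to perceive) agent `a` knows
`ψ`. -/
theorem adpal_knowledge_leakage :
    ¬ sat (.k 0 (.k 1 (.atom ()))) leakModel (1 : Fin 3) ∧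
    sat (.ann (.k 2 (.k 2 (.atom ()))) (.k 0 (.k 1 (.atom ())))) leakModel (1 : Fin 3) := by
  constructor
  · simp only [sat, Form.md, leakModel, not_and]
    intro _ h
    have := h 1 rfl
    simp [sat, leakModel] at this
    exact absurd (this 2 (by decide)) (by decide)
  · intro _
    simp only [sat, Form.md, leakModel, upd]
    constructor
    · simp
    · intro t ht
      have ht1 : t = 1 := by simpa [eq_comm] using ht.1
      subst ht1
      constructor
      · simp
      · intro u hu
        rcases hu with ⟨h1, h2⟩
        fin_cases u
        · simp [leakModel]
        · simp [leakModel]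
        · exfalso
          apply h2
          refine ⟨by simp [leakModel], ?_⟩
          decide
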